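/- Let b = (b_n)_n be a sequence of n-bandwidths, fix n, k ∈ ℕ and let s, s' ∈ [n]^k_b. Then: (a) if both s and s' contain only even edges, #𝒯^c(s,s') ≤ k² · (2k)^{2k} · n · b_n^{k−1}; (b) if s or s' contains at least one odd edge, #𝒯^c(s,s') ≤ k² · (2k)^{2k} · n · b_n^{κ_1(s)+⋯+κ_k(s)+κ_1(s')+⋯+κ_k(s')−2}; (c) if s or s' contains at least one odd edge, then for every l ∈ {1,…,k}, #𝒯^c_l(s,s') ≤ k² · (2k)^{2k} · n · b_n^{κ_1(s)+⋯+κ_k(s)+κ_1(s')+⋯+κ_k(s')−l−1}. -/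

import Mathlib

/-!
Each pair `(t, t')` is encoded injectively. Read `t` as a closed walk: record its start (`n`
choices) and, for every step, the first time its endpoint was visited (`< k` choices, the step
index itself marking a new vertex); for a step to a new vertex also record the index of that
vertex among the at most `b_n` relevant neighbours of the previous one. Read `t'` from its first
visit to a vertex of `t` (two indices `< k` locate that start), recording a step along an edge
shared with `t` by its position in `t` instead; only its new-vertex steps off shared edges cost a
factor `b_n`. New-vertex steps use pairwise distinct edges, so `t` has at most `#E(t)` of them and
`t'` at most `#E(t') - #(shared edges)`. If `t` has an odd edge, `t` has at most `#E(t) - 1`: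
a closed walk on a tree traverses every edge an even number of times. If only `t'` has an odd
edge, the roles are swapped.
-/

open MeasureTheory ProbabilityTheory Filter Finset
open scoped BigOperators ENNReal NNReal Classical

noncomputable section

namespace RMT

variable {Ω : Type} [MeasurableSpace Ω]

/-- A triangular scheme: for each `n`, a symmetric `n × n` matrix of (measurable) real-valued
random variables, with entries indexed by `{1, …, n}²`. -/
def IsTriangularScheme (a : ℕ → ℕ → ℕ → Ω → ℝ) : Prop :=
  ∀ n p q, p ∈ Finset.Icc 1 n → q ∈ Finset.Icc 1 n →
    a n p q = a n q p ∧ Measurable (a n p q)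

/-- Condition (AAU1): distinct decay and boundedness, with constants `C k` and decay
parameter `α`.  The pairs `pq i` range over `{1,…,N}²`, are pairwise fundamentally
different (i.e. distinct as unordered pairs), and `δ i ≥ 1` are the multiplicities. -/
def AAU1 (P : Measure Ω) (a : ℕ → ℕ → ℕ → Ω → ℝ) (α : ℝ) (C : ℕ → ℝ) : Prop :=
  ∀ (N l : ℕ) (pq : Fin l → ℕ × ℕ),
    (∀ i, (pq i).1 ∈ Finset.Icc 1 N ∧ (pq i).2 ∈ Finset.Icc 1 N) →
    (∀ i j, i ≠ j → s((pq i).1, (pq i).2) ≠ s((pq j).1, (pq j).2)) →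
    ∀ n, N ≤ n → ∀ δ : Fin l → ℕ, (∀ i, 1 ≤ δ i) →
      |∫ ω, ∏ i, a n (pq i).1 (pq i).2 ω ^ δ i ∂P| ≤
        C (∑ i, δ i) / (n : ℝ) ^ (α * ((Finset.univ.filter fun i => δ i = 1).card : ℝ))

/-- Condition (AAU2): second moment condition with constants `C' l n`. -/
def AAU2 (P : Measure Ω) (a : ℕ → ℕ → ℕ → Ω → ℝ) (C' : ℕ → ℕ → ℝ) : Prop :=
  ∀ (N l : ℕ) (pq : Fin l → ℕ × ℕ),
    (∀ i, (pq i).1 ∈ Finset.Icc 1 N ∧ (pq i).2 ∈ Finset.Icc 1 N) →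
    (∀ i j, i ≠ j → s((pq i).1, (pq i).2) ≠ s((pq j).1, (pq j).2)) →
    ∀ n, N ≤ n →
      |(∫ ω, ∏ i, a n (pq i).1 (pq i).2 ω ^ 2 ∂P) - 1| ≤ C' l n

/-- Condition (AAU3): fourth moment condition with constants `D l n`. -/
def AAU3 (P : Measure Ω) (a : ℕ → ℕ → ℕ → Ω → ℝ) (D : ℕ → ℕ → ℝ) : Prop :=
  ∀ (N l : ℕ) (hl : 0 < l) (pq : Fin l → ℕ × ℕ),
    (∀ i, (pq i).1 ∈ Finset.Icc 1 N ∧ (pq i).2 ∈ Finset.Icc 1 N) →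
    (∀ i j, i ≠ j → s((pq i).1, (pq i).2) ≠ s((pq j).1, (pq j).2)) →
    ∀ n, N ≤ n →
      |∫ ω, a n (pq ⟨0, hl⟩).1 (pq ⟨0, hl⟩).2 ω ^ 4 *
          ((∏ i ∈ Finset.univ.erase ⟨0, hl⟩, a n (pq i).1 (pq i).2 ω ^ 2) - 1) ∂P| ≤ D l n

/-- `α`-almost uncorrelated triangular scheme. -/
def AlmostUncorrelated (P : Measure Ω) (a : ℕ → ℕ → ℕ → Ω → ℝ) (α : ℝ) : Prop :=
  ∃ (C : ℕ → ℝ) (C' : ℕ → ℕ → ℝ),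
    (∀ m, Tendsto (fun n => C' m n) atTop (nhds 0)) ∧ AAU1 P a α C ∧ AAU2 P a C'

/-- Strongly `α`-almost uncorrelated triangular scheme. -/
def StronglyAlmostUncorrelated (P : Measure Ω) (a : ℕ → ℕ → ℕ → Ω → ℝ) (α : ℝ) : Prop :=
  ∃ (C : ℕ → ℝ) (C' D : ℕ → ℕ → ℝ),
    (∀ m, Tendsto (fun n => C' m n) atTop (nhds 0)) ∧
    (∀ m, Tendsto (fun n => D m n) atTop (nhds 0)) ∧
    AAU1 P a α C ∧ AAU2 P a C' ∧ AAU3 P a D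

/-- Approximately uncorrelated triangular scheme (Hochstättler–Kirsch–Warzel). -/
def ApproxUncorrelated (P : Measure Ω) (a : ℕ → ℕ → ℕ → Ω → ℝ) : Prop :=
  ∃ (K : ℕ → ℕ → ℝ) (K' : ℕ → ℕ → ℝ),
    (∀ s m, 0 ≤ K s m) ∧ (∀ s n, 0 ≤ K' s n) ∧
    (∀ s, Tendsto (fun n => K' s n) atTop (nhds 0)) ∧
    ∀ (N s m : ℕ) (pq : Fin (s + m) → ℕ × ℕ),
      (∀ i, (pq i).1 ∈ Finset.Icc 1 N ∧ (pq i).2 ∈ Finset.Icc 1 N) →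
      (∀ i j : Fin (s + m), (i : ℕ) < s → i ≠ j →
        s((pq i).1, (pq i).2) ≠ s((pq j).1, (pq j).2)) →
      ∀ n, N ≤ n →
        |∫ ω, ∏ i, a n (pq i).1 (pq i).2 ω ∂P| ≤ K s m / (n : ℝ) ^ ((s : ℝ) / 2) ∧
        |(∫ ω, ∏ i ∈ Finset.univ.filter (fun i : Fin (s + m) => (i : ℕ) < s),
            a n (pq i).1 (pq i).2 ω ^ 2 ∂P) - 1| ≤ K' s n

/-- A Wigner scheme: independent entries (up to symmetry), centered, unit variance,
with uniformly bounded moments of all orders. -/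
def IsWignerScheme (P : Measure Ω) (a : ℕ → ℕ → ℕ → Ω → ℝ) : Prop :=
  IsTriangularScheme a ∧
  (∀ n : ℕ, iIndepFun
      (fun ij : {p : ℕ × ℕ // 1 ≤ p.1 ∧ p.1 ≤ p.2 ∧ p.2 ≤ n} => a n ij.1.1 ij.1.2) P) ∧
  (∀ n, ∀ p ∈ Finset.Icc 1 n, ∀ q ∈ Finset.Icc 1 n,
      (∫ ω, a n p q ω ∂P) = 0 ∧ (∫ ω, a n p q ω ^ 2 ∂P) = 1) ∧
  (∀ k : ℕ, ∃ Cp : ℝ, ∀ n, ∀ p ∈ Finset.Icc 1 n, ∀ q ∈ Finset.Icc 1 n,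
      (∫ ω, |a n p q ω| ^ k ∂P) ≤ Cp)

/-- `b` is an `n`-bandwidth: an odd number `< n`, or `n` itself. -/
def IsBandwidth (n b : ℕ) : Prop := (b < n ∧ Odd b) ∨ b = n

/-- The pair `(i,j) ∈ {1,…,n}²` is `bn`-relevant. -/
def BRelevant (n bn i j : ℕ) : Prop :=
  bn = n ∨ |(i : ℤ) - (j : ℤ)| ≤ ((bn - 1) / 2 : ℕ) ∨
    (n : ℤ) - ((bn - 1) / 2 : ℕ) ≤ |(i : ℤ) - (j : ℤ)|

/-- The periodic random band matrix of dimension `n × n` based on the scheme `a` with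
bandwidths `b` : entries `X_n(p,q) = b_n^{-1/2} a_n(p,q)` for `b_n`-relevant `(p,q)`, else `0`. -/
def bandMatrix (a : ℕ → ℕ → ℕ → Ω → ℝ) (b : ℕ → ℕ) (n : ℕ) (ω : Ω) :
    Matrix (Fin n) (Fin n) ℝ := fun i j =>
  if BRelevant n (b n) (i.1 + 1) (j.1 + 1)
  then (Real.sqrt (b n))⁻¹ * a n (i.1 + 1) (j.1 + 1) ω else 0

/-- The empirical spectral distribution of a real symmetric matrix
(junk value `0` if the matrix is not symmetric). -/
def ESD {n : ℕ} (M : Matrix (Fin n) (Fin n) ℝ) : Measure ℝ :=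
  if h : M.IsHermitian then
    ((n : ℝ≥0∞))⁻¹ • ∑ i : Fin n, Measure.dirac (h.eigenvalues i)
  else 0

/-- The semicircle distribution, with Lebesgue density
`(2π)⁻¹ √(4 - x²) 1_{[-2,2]}(x)`. -/
def semicircle : Measure ℝ :=
  volume.withDensity fun x =>
    ENNReal.ofReal (if -2 ≤ x ∧ x ≤ 2 then (2 * Real.pi)⁻¹ * Real.sqrt (4 - x ^ 2) else 0)

/-- The semicircle law holds in probability for the random matrices `X n`. -/
def SemicircleLawInProbability (P : Measure Ω)
    (X : (n : ℕ) → Ω → Matrix (Fin n) (Fin n) ℝ) : Prop :=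
  ∀ f : BoundedContinuousFunction ℝ ℝ,
    TendstoInMeasure P (fun n ω => ∫ x, f x ∂ ESD (X n ω)) atTop
      (fun _ => ∫ x, f x ∂ semicircle)

/-- The semicircle law holds almost surely for the random matrices `X n`. -/
def SemicircleLawAS (P : Measure Ω)
    (X : (n : ℕ) → Ω → Matrix (Fin n) (Fin n) ℝ) : Prop :=
  ∀ f : BoundedContinuousFunction ℝ ℝ,
    ∀ᵐ ω ∂P, Tendsto (fun n => ∫ x, f x ∂ ESD (X n ω)) atTop
      (nhds (∫ x, f x ∂ semicircle))

/-- The family `Y` is Curie-Weiss(`β`, `card ι`)-distributed. -/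
def IsCurieWeiss {ι : Type} [Fintype ι] (P : Measure Ω) (β : ℝ) (Y : ι → Ω → ℝ) : Prop :=
  (∀ i, Measurable (Y i)) ∧
  (∀ᵐ ω ∂P, ∀ i, Y i ω = 1 ∨ Y i ω = -1) ∧
  ∃ Z : ℝ, 0 < Z ∧ ∀ y : ι → ℝ, (∀ i, y i = 1 ∨ y i = -1) →
    P {ω | ∀ i, Y i ω = y i} =
      ENNReal.ofReal (Z⁻¹ * Real.exp (β / (2 * Fintype.card ι) * (∑ i, y i) ^ 2))

/-- `Δ n = n (n+1) / 2`. -/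
def Δn (n : ℕ) : ℕ := n * (n + 1) / 2

/-- Pair partitions of `{1, …, k}`, encoded as fixed-point-free involutions of `Fin k`. -/
def PairPartitions (k : ℕ) : Finset (Equiv.Perm (Fin k)) :=
  Finset.univ.filter fun π => ∀ r, π (π r) = r ∧ π r ≠ r

/-- The product `∏_{{r,s} ∈ π} S (i r) (i s)` over the blocks of a pair partition `π`. -/
def pairProd {k m : ℕ} (S : Matrix (Fin m) (Fin m) ℝ) (i : Fin k → Fin m)
    (π : Equiv.Perm (Fin k)) : ℝ :=
  ∏ r ∈ Finset.univ.filter (fun r => r < π r), S (i r) (i (π r))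

/-- `(Σ_n)_n ∈ CovMat(α)`: symmetric positive definite, unit diagonal, off-diagonal
entries bounded by `n^{-α}`. -/
def CovMatSeq (α : ℝ) (S : ∀ n : ℕ, Matrix (Fin n) (Fin n) ℝ) : Prop :=
  ∀ n, (S n).IsSymm ∧ (S n).PosDef ∧ (∀ i, S n i i = 1) ∧
    ∀ i j : Fin n, i ≠ j → |S n i j| ≤ 1 / (n : ℝ) ^ α

/-- Position `r` (0-based) lies in the `j`-th block of sizes `δ 0, δ 1, …`. -/
def inBlock {l : ℕ} (δ : Fin l → ℕ) (j : Fin l) (r : ℕ) : Prop :=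
  (∑ j' ∈ Finset.univ.filter (· < j), δ j') ≤ r ∧
    r < ∑ j' ∈ Finset.univ.filter (· ≤ j), δ j'

/-- The family `Y` is a centered Gaussian family with covariance matrix `S`:
every linear combination is a centered real Gaussian with the corresponding variance. -/
def IsCenteredGaussianFamily (P : Measure Ω) {m : ℕ}
    (Y : Fin m → Ω → ℝ) (S : Matrix (Fin m) (Fin m) ℝ) : Prop :=
  (∀ i, Measurable (Y i)) ∧
  ∀ c : Fin m → ℝ,
    Measure.map (fun ω => ∑ i, c i * Y i ω) P =
      gaussianReal 0 (Real.toNNReal (∑ i, ∑ j, c i * S i j * c j))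

/-- The Gaussian triangular scheme `a` constructed from a covariance sequence `S`
via a filling bijection `φ` (with values in `{1,…,Δ_n}`) and Gaussian vectors `Y`. -/
def GaussianScheme (P : Measure Ω) (S : ∀ m, Matrix (Fin m) (Fin m) ℝ)
    (φ : ℕ → ℕ → ℕ → ℕ) (Y : ℕ → ℕ → Ω → ℝ) (a : ℕ → ℕ → ℕ → Ω → ℝ) : Prop :=
  (∀ n, Set.BijOn (fun p : ℕ × ℕ => φ n p.1 p.2)
      {p : ℕ × ℕ | 1 ≤ p.1 ∧ p.1 ≤ p.2 ∧ p.2 ≤ n} (Set.Icc 1 (Δn n))) ∧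
  (∀ n i j, j < i → φ n i j = φ n j i) ∧
  (∀ n, IsCenteredGaussianFamily P (fun t : Fin (Δn n) => Y n (t.1 + 1)) (S (Δn n))) ∧
  (∀ n i j, a n i j = Y n (φ n i j))

/-- Cyclic successor on `Fin k`. -/
def cyc {k : ℕ} (i : Fin k) : Fin k :=
  ⟨(i.1 + 1) % k, Nat.mod_lt _ (Nat.lt_of_le_of_lt (Nat.zero_le _) i.isLt)⟩

/-- The multiset of edges of the cyclic multigraph of the tuple `t`. -/
def tupleEdges {k : ℕ} (t : Fin k → ℕ) : Multiset (Sym2 ℕ) :=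
  Finset.univ.val.map fun i : Fin k => s(t i, t (cyc i))

/-- `kappa t l` = number of distinct `l`-fold edges of `t`. -/
def kappa {k : ℕ} (t : Fin k → ℕ) (l : ℕ) : ℕ :=
  ((tupleEdges t).toFinset.filter fun e => (tupleEdges t).count e = l).card

/-- Number of distinct loops of `t`. -/
def numLoops {k : ℕ} (t : Fin k → ℕ) : ℕ :=
  ((tupleEdges t).toFinset.filter fun e => e.IsDiag).card

/-- `t` has at least one odd edge. -/
def hasOddEdge {k : ℕ} (t : Fin k → ℕ) : Prop :=
  ∃ e ∈ (tupleEdges t).toFinset, Odd ((tupleEdges t).count e)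

/-- `t` has only even edges. -/
def hasOnlyEvenEdges {k : ℕ} (t : Fin k → ℕ) : Prop :=
  ∀ e ∈ (tupleEdges t).toFinset, Even ((tupleEdges t).count e)

/-- Vertex set of the tuple `t`. -/
def verts {k : ℕ} (t : Fin k → ℕ) : Finset ℕ := Finset.image t Finset.univ

/-- The set of `bn`-relevant `k`-tuples with entries in `{1,…,n}`. -/
def relTuples (n bn k : ℕ) : Finset (Fin k → ℕ) :=
  (Fintype.piFinset fun _ : Fin k => Finset.Icc 1 n).filter
    fun t => ∀ i : Fin k, BRelevant n bn (t i) (t (cyc i))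

/-- `t` and `s` have the same profile `κ`. -/
def sameProfile {k : ℕ} (t s : Fin k → ℕ) : Prop :=
  ∀ l ∈ Finset.Icc 1 k, kappa t l = kappa s l

/-- Equivalence class `𝒯(s)` of `s` in `[n]^k_b`. -/
def Tclass (n bn k : ℕ) (s : Fin k → ℕ) : Finset (Fin k → ℕ) :=
  (relTuples n bn k).filter fun t => sameProfile t s

/-- `𝒯^c(s,s')`: pairs of tuples with prescribed profiles having a common edge. -/
def Tcommon (n bn k : ℕ) (s s' : Fin k → ℕ) : Finset ((Fin k → ℕ) × (Fin k → ℕ)) :=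
  ((relTuples n bn k) ×ˢ (relTuples n bn k)).filter fun tt =>
    sameProfile tt.1 s ∧ sameProfile tt.2 s' ∧
      ((tupleEdges tt.1).toFinset ∩ (tupleEdges tt.2).toFinset).Nonempty

/-- `𝒯^c_l(s,s')`: pairs in `𝒯^c(s,s')` with exactly `l` common edges. -/
def TcommonL (n bn k : ℕ) (s s' : Fin k → ℕ) (l : ℕ) :
    Finset ((Fin k → ℕ) × (Fin k → ℕ)) :=
  (Tcommon n bn k s s').filter fun tt =>
    ((tupleEdges tt.1).toFinset ∩ (tupleEdges tt.2).toFinset).card = l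

section CyclicWalk

variable {k : ℕ}

def cycWalk (t : Fin k → ℕ) (i : ℕ) : ℕ :=
  if h : 0 < k then t ⟨i % k, Nat.mod_lt i h⟩ else 0

def cycEdge (t : Fin k → ℕ) (i : ℕ) : Sym2 ℕ := s(cycWalk t i, cycWalk t (i + 1))

lemma cycWalk_mod (t : Fin k → ℕ) (i : ℕ) : cycWalk t (i % k) = cycWalk t i := by
  simp [cycWalk]

lemma cycWalk_val (t : Fin k → ℕ) (i : Fin k) : cycWalk t i = t i := by
  simp [cycWalk, i.pos, Nat.mod_eq_of_lt i.isLt]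

lemma cycWalk_add_mod (t : Fin k → ℕ) (i j : ℕ) :
    cycWalk t (i % k + j) = cycWalk t (i + j) := by
  rw [← cycWalk_mod t (i % k + j), ← cycWalk_mod t (i + j), Nat.mod_add_mod]

lemma apply_cyc (t : Fin k → ℕ) (i : Fin k) : t (cyc i) = cycWalk t (i + 1) := by
  rw [← cycWalk_val t (cyc i), ← cycWalk_mod t (i + 1)]
  rfl

lemma cycEdge_mod (t : Fin k → ℕ) (i : ℕ) : cycEdge t (i % k) = cycEdge t i := by
  rw [cycEdge, cycEdge, cycWalk_mod, cycWalk_add_mod]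

lemma tupleEdges_eq_map_range (t : Fin k → ℕ) :
    tupleEdges t = (Multiset.range k).map (cycEdge t) := by
  have h : ∀ i : Fin k, s(t i, t (cyc i)) = cycEdge t i := fun i => by
    rw [cycEdge, cycWalk_val, apply_cyc t i]
  simp only [tupleEdges, h]
  rw [show (fun i : Fin k => cycEdge t i) = cycEdge t ∘ Fin.valEmbedding from rfl,
    ← Multiset.map_map, ← Finset.map_val, Fin.map_valEmbedding_univ, Nat.Iio_eq_range,
    Finset.range_val]

lemma mem_tupleEdges {t : Fin k → ℕ} {e : Sym2 ℕ} :
    e ∈ (tupleEdges t).toFinset ↔ ∃ i < k, cycEdge t i = e := by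
  simp [tupleEdges_eq_map_range]

lemma cycEdge_mem (hk : 0 < k) (t : Fin k → ℕ) (i : ℕ) :
    cycEdge t i ∈ (tupleEdges t).toFinset :=
  mem_tupleEdges.2 ⟨i % k, Nat.mod_lt i hk, cycEdge_mod t i⟩

lemma cycWalk_step_mem (hk : 0 < k) (t : Fin k → ℕ) {r : ℕ} (hr : 1 ≤ r) :
    s(cycWalk t (r - 1), cycWalk t r) ∈ (tupleEdges t).toFinset := by
  simpa [cycEdge, Nat.sub_add_cancel hr] using cycEdge_mem hk t (r - 1)

end CyclicWalk

section Profile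

variable {k : ℕ}

lemma count_mem_Icc {t : Fin k → ℕ} {e : Sym2 ℕ} (he : e ∈ (tupleEdges t).toFinset) :
    (tupleEdges t).count e ∈ Icc 1 k := by
  refine Finset.mem_Icc.2 ⟨Multiset.one_le_count_iff_mem.2 (Multiset.mem_toFinset.1 he), ?_⟩
  simpa [tupleEdges] using Multiset.count_le_card e (tupleEdges t)

lemma sum_kappa (t : Fin k → ℕ) :
    ∑ l ∈ Icc 1 k, kappa t l = (tupleEdges t).toFinset.card :=
  (Finset.card_eq_sum_card_fiberwise fun _ he => count_mem_Icc he).symm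

lemma sameProfile.card_edges_eq {t u : Fin k → ℕ} (h : sameProfile t u) :
    (tupleEdges t).toFinset.card = (tupleEdges u).toFinset.card := by
  rw [← sum_kappa, ← sum_kappa]
  exact Finset.sum_congr rfl h

lemma sameProfile.hasOddEdge {t u : Fin k → ℕ} (h : sameProfile t u) (hu : hasOddEdge u) :
    hasOddEdge t := by
  obtain ⟨e, he, hodd⟩ := hu
  have hpos : 0 < kappa t ((tupleEdges u).count e) := by
    rw [h _ (count_mem_Icc he)]
    exact Finset.card_pos.2 ⟨e, Finset.mem_filter.2 ⟨he, rfl⟩⟩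
  obtain ⟨f, hf⟩ := Finset.card_pos.1 hpos
  rw [Finset.mem_filter] at hf
  exact ⟨f, hf.1, hf.2 ▸ hodd⟩

lemma two_mul_card_edges_le {t : Fin k → ℕ} (h : hasOnlyEvenEdges t) :
    2 * (tupleEdges t).toFinset.card ≤ k := by
  calc 2 * (tupleEdges t).toFinset.card = ∑ _e ∈ (tupleEdges t).toFinset, 2 := by
        rw [Finset.sum_const, smul_eq_mul, mul_comm]
    _ ≤ ∑ e ∈ (tupleEdges t).toFinset, (tupleEdges t).count e := by
        refine Finset.sum_le_sum fun e he => ?_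
        obtain ⟨c, hc⟩ := h e he
        have := (Finset.mem_Icc.1 (count_mem_Icc he)).1
        omega
    _ = k := by rw [Multiset.toFinset_sum_count_eq]; simp [tupleEdges]

lemma card_edges_pos (hk : 0 < k) (t : Fin k → ℕ) : 0 < (tupleEdges t).toFinset.card :=
  Finset.card_pos.2 ⟨_, cycEdge_mem hk t 0⟩

end Profile

section Crossing

variable {k : ℕ}

def Crosses (p : ℕ → Prop) (e : Sym2 ℕ) : Prop := (∃ x ∈ e, p x) ∧ ∃ y ∈ e, ¬p y

lemma crosses_mk {p : ℕ → Prop} {a b : ℕ} : Crosses p s(a, b) ↔ ¬(p a ↔ p b) := by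
  simp only [Crosses, Sym2.mem_iff, exists_eq_or_imp, exists_eq_left]
  tauto

lemma even_countP_crosses (t : Fin k → ℕ) (p : ℕ → Prop) :
    Even ((tupleEdges t).countP (Crosses p)) := by
  set f : ℕ → ZMod 2 := fun i => if p (cycWalk t i) then 1 else 0
  have hstep : ∀ i, (if Crosses p (cycEdge t i) then 1 else 0 : ZMod 2) = f (i + 1) - f i := by
    intro i
    simp only [f, cycEdge, crosses_mk]
    by_cases h₁ : p (cycWalk t i) <;> by_cases h₂ : p (cycWalk t (i + 1)) <;> simp [h₁, h₂]
  have hclosed : f k = f 0 := by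
    simp only [f, ← cycWalk_mod t k, Nat.mod_self]
  rw [← ZMod.natCast_eq_zero_iff_even, tupleEdges_eq_map_range, Multiset.countP_map,
    ← Finset.range_val, ← Finset.filter_val, ← Finset.card_def, Finset.natCast_card_filter,
    Finset.sum_congr rfl fun i _ => hstep i, Finset.sum_range_sub, hclosed, sub_self]

lemma sum_count_crosses (t : Fin k → ℕ) (p : ℕ → Prop) :
    ∑ e ∈ (tupleEdges t).toFinset.filter (Crosses p), (tupleEdges t).count e =
      (tupleEdges t).countP (Crosses p) := by
  rw [Multiset.countP_eq_card_filter, ← Multiset.toFinset_sum_count_eq, Multiset.toFinset_filter]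
  exact Finset.sum_congr rfl fun e he =>
    (Multiset.count_filter_of_pos (Finset.mem_filter.1 he).2).symm

end Crossing

section FreshSteps

variable {k : ℕ}

def birth (W : ℕ → ℕ) (x : ℕ) : ℕ := sInf {j | W j = x}

lemma birth_le (W : ℕ → ℕ) (j : ℕ) : birth W (W j) ≤ j := Nat.sInf_le rfl

lemma apply_birth (W : ℕ → ℕ) (j : ℕ) : W (birth W (W j)) = W j :=
  Nat.sInf_mem (s := {i | W i = W j}) ⟨j, rfl⟩

lemma apply_ne_of_lt_birth {W : ℕ → ℕ} {j r : ℕ} (hr : birth W (W r) = r) (hj : j < r) :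
    W j ≠ W r := fun h => by
  have := birth_le W j
  rw [h, hr] at this
  omega

def IsFreshStep (CE : Finset (Sym2 ℕ)) (W : ℕ → ℕ) (r : ℕ) : Prop :=
  1 ≤ r ∧ s(W (r - 1), W r) ∉ CE ∧ birth W (W r) = r

def freshCount (k : ℕ) (CE : Finset (Sym2 ℕ)) (W : ℕ → ℕ) : ℕ :=
  (univ.filter fun r : Fin k => IsFreshStep CE W r).card

lemma injOn_freshStep (k : ℕ) (CE : Finset (Sym2 ℕ)) (W : ℕ → ℕ) :
    Set.InjOn (fun r : Fin k => s(W (r - 1), W r))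
      (univ.filter fun r : Fin k => IsFreshStep CE W r) := by
  have key : ∀ a b, IsFreshStep CE W b → a < b → s(W (a - 1), W a) ≠ s(W (b - 1), W b) := by
    intro a b hb hab he
    rcases Sym2.eq_iff.1 he with ⟨-, h⟩ | ⟨h, -⟩
    · exact apply_ne_of_lt_birth hb.2.2 hab h
    · exact apply_ne_of_lt_birth hb.2.2 (by omega) h
  intro a ha b hb he
  simp only [Finset.coe_filter, Finset.mem_univ, true_and, Set.mem_ofPred_eq] at ha hb
  rcases lt_trichotomy (a : ℕ) b with h | h | h
  · exact absurd he (key a b hb h)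
  · exact Fin.ext h
  · exact absurd he.symm (key b a ha h)

lemma freshCount_add_card_le {CE E : Finset (Sym2 ℕ)} {W : ℕ → ℕ}
    (hstep : ∀ r, 1 ≤ r → r < k → s(W (r - 1), W r) ∈ E) (hCE : CE ⊆ E) :
    freshCount k CE W + CE.card ≤ E.card := by
  have himage : (univ.filter fun r : Fin k => IsFreshStep CE W r).image
      (fun r : Fin k => s(W (r - 1), W r)) ⊆ E \ CE := by
    simp only [Finset.image_subset_iff, Finset.mem_filter_univ, Finset.mem_sdiff]
    exact fun r hfresh => ⟨hstep r hfresh.1 r.isLt, hfresh.2.1⟩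
  have := Finset.card_le_card himage
  rw [Finset.card_image_of_injOn (injOn_freshStep k CE W),
    Finset.card_sdiff_of_subset hCE] at this
  have := Finset.card_le_card hCE
  unfold freshCount
  omega

lemma freshCount_le_card_edges (hk : 0 < k) (t : Fin k → ℕ) :
    freshCount k ∅ (cycWalk t) ≤ (tupleEdges t).toFinset.card := by
  simpa using freshCount_add_card_le (fun r hr _ => cycWalk_step_mem hk t hr)
    (Finset.empty_subset (tupleEdges t).toFinset)

end FreshSteps

section OddEdge

variable {k : ℕ}

/-- The closed walk crosses the cut `{x | r ≤ birth W x}` an even number of times, and besides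
the edge of the fresh step `r` only edges of later fresh steps cross it: downward induction. -/
lemma even_count_of_forall_fresh (hk : 0 < k) (t : Fin k → ℕ)
    (hcover : ∀ e ∈ (tupleEdges t).toFinset, ∃ r : Fin k, IsFreshStep ∅ (cycWalk t) r ∧
      s(cycWalk t (r - 1), cycWalk t r) = e) :
    ∀ e ∈ (tupleEdges t).toFinset, Even ((tupleEdges t).count e) := by
  set W := cycWalk t
  suffices h : ∀ r, r < k → IsFreshStep ∅ W r →
      Even ((tupleEdges t).count s(W (r - 1), W r)) by
    intro e he
    obtain ⟨r, hfresh, rfl⟩ := hcover e he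
    exact h r r.isLt hfresh
  refine Nat.strong_decreasing_induction ⟨k, fun m hm hmk => absurd hmk (by omega)⟩ ?_
  intro r ih hr hfresh
  set p : ℕ → Prop := fun x => r ≤ birth W x
  set C := (tupleEdges t).toFinset.filter (Crosses p)
  have hcross : ∀ r', IsFreshStep ∅ W r' → Crosses p s(W (r' - 1), W r') → r ≤ r' := by
    intro r' hfresh' hc
    have := birth_le W (r' - 1)
    simp only [crosses_mk, p, hfresh'.2.2] at hc
    omega
  have hmem : s(W (r - 1), W r) ∈ C := by
    have := birth_le W (r - 1)
    refine Finset.mem_filter.2 ⟨cycWalk_step_mem hk t hfresh.1, ?_⟩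
    simp only [crosses_mk, p, hfresh.2.2, le_refl, iff_true]
    have := hfresh.1
    omega
  have hrest : Even (∑ e ∈ C.erase s(W (r - 1), W r), (tupleEdges t).count e) := by
    refine Finset.even_sum _ fun e he => ?_
    obtain ⟨hne, heC⟩ := Finset.mem_erase.1 he
    obtain ⟨r', hfresh', rfl⟩ := hcover e (Finset.mem_filter.1 heC).1
    have hle := hcross r' hfresh' (Finset.mem_filter.1 heC).2
    exact ih r' (lt_of_le_of_ne hle fun h => hne (h ▸ rfl)) r'.isLt hfresh'
  have htotal := even_countP_crosses t p
  rw [← sum_count_crosses, ← Finset.add_sum_erase C _ hmem] at htotal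
  exact (Nat.even_add.1 htotal).2 hrest

lemma freshCount_lt_card_edges (hk : 0 < k) {t : Fin k → ℕ} (hodd : hasOddEdge t) :
    freshCount k ∅ (cycWalk t) < (tupleEdges t).toFinset.card := by
  by_contra! hge
  have himage : (univ.filter fun r : Fin k => IsFreshStep ∅ (cycWalk t) r).image
      (fun r : Fin k => s(cycWalk t (r - 1), cycWalk t r)) = (tupleEdges t).toFinset := by
    refine Finset.eq_of_subset_of_card_le ?_ ?_
    · simp only [Finset.image_subset_iff, Finset.mem_filter_univ]
      exact fun r hfresh => cycWalk_step_mem hk t hfresh.1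
    · rwa [Finset.card_image_of_injOn (injOn_freshStep k ∅ _)]
  have hcover : ∀ e ∈ (tupleEdges t).toFinset, ∃ r : Fin k, IsFreshStep ∅ (cycWalk t) r ∧
      s(cycWalk t (r - 1), cycWalk t r) = e := by
    intro e he
    rw [← himage] at he
    simpa only [Finset.mem_image, Finset.mem_filter_univ] using he
  obtain ⟨e, he, hodd⟩ := hodd
  exact Nat.not_odd_iff_even.2 (even_count_of_forall_fresh hk t hcover e he) hodd

end OddEdge

section Band

def relSet (n bn x : ℕ) : Finset ℕ := (Icc 1 n).filter (BRelevant n bn x)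

lemma IsBandwidth.one_le {n bn : ℕ} (hn : 0 < n) (hb : IsBandwidth n bn) : 1 ≤ bn := by
  rcases hb with ⟨-, m, rfl⟩ | rfl <;> omega

lemma natCast_injOn_Icc (n : ℕ) : Set.InjOn (Nat.cast : ℕ → ZMod n) (Icc 1 n) := by
  intro y hy z hz h
  simp only [Finset.coe_Icc, Set.mem_Icc] at hy hz
  rw [← Int.cast_natCast, ← Int.cast_natCast (R := ZMod n) z,
    ZMod.intCast_eq_intCast_iff_dvd_sub] at h
  have := Int.eq_zero_of_abs_lt_dvd h (abs_lt.2 ⟨by omega, by omega⟩)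
  omega

/-- Modulo `n`, the partners of `x` lie within distance `(bn - 1) / 2` of `x`. -/
lemma card_relSet_le {n bn x : ℕ} (hb : IsBandwidth n bn) (hx : x ∈ Icc 1 n) :
    (relSet n bn x).card ≤ bn := by
  rcases hb with ⟨hlt, h, rfl⟩ | rfl
  · have hsub : (relSet n (2 * h + 1) x).image (Nat.cast : ℕ → ZMod n) ⊆
        (Icc (-(h : ℤ)) h).image fun d : ℤ => (x : ZMod n) + d := by
      intro z hz
      obtain ⟨y, hy, rfl⟩ := Finset.mem_image.1 hz
      obtain ⟨hy, hrel⟩ := Finset.mem_filter.1 hy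
      simp only [Finset.mem_Icc] at hx hy
      simp only [BRelevant, Nat.add_sub_cancel, Nat.mul_div_cancel_left h two_pos, abs_le,
        le_abs] at hrel
      simp only [Finset.mem_image, Finset.mem_Icc]
      have hn : ((n : ℤ) : ZMod n) = 0 := by simp
      rcases hrel with hrel | hrel | hrel | hrel
      · omega
      · exact ⟨y - x, by omega, by push_cast; ring⟩
      · exact ⟨y - x + n, by omega, by rw [Int.cast_add, hn]; push_cast; ring⟩
      · exact ⟨y - x - n, by omega, by rw [Int.cast_sub, hn]; push_cast; ring⟩
    calc (relSet n (2 * h + 1) x).card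
        = ((relSet n (2 * h + 1) x).image (Nat.cast : ℕ → ZMod n)).card :=
          (Finset.card_image_of_injOn ((natCast_injOn_Icc n).mono
            (Finset.coe_subset.2 (Finset.filter_subset _ _)))).symm
      _ ≤ (Icc (-(h : ℤ)) h).card := (Finset.card_le_card hsub).trans Finset.card_image_le
      _ = 2 * h + 1 := by rw [Int.card_Icc]; omega
  · exact (Finset.card_filter_le _ _).trans (by simp)

end Band

section WalkCode

variable {k : ℕ}

def edgeIndex (t : Fin k → ℕ) (e : Sym2 ℕ) : ℕ := sInf {i | i < k ∧ cycEdge t i = e}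

lemma edgeIndex_spec {t : Fin k → ℕ} {e : Sym2 ℕ} (he : e ∈ (tupleEdges t).toFinset) :
    edgeIndex t e < k ∧ cycEdge t (edgeIndex t e) = e :=
  Nat.sInf_mem (mem_tupleEdges.1 he)

/-- Step `r ≥ 1` of `W` is recorded as `k + i` if it runs along the marked edge `cycEdge t i`,
and otherwise as the first time its endpoint was visited (`r` itself for a fresh vertex). -/
def stepCode (t : Fin k → ℕ) (CE : Finset (Sym2 ℕ)) (W : ℕ → ℕ) (r : Fin k) : ℕ :=
  if s(W (r - 1), W r) ∈ CE then k + edgeIndex t s(W (r - 1), W r) else birth W (W r)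

def nbrIndex (R : ℕ → Finset ℕ) (x y : ℕ) : ℕ :=
  if h : y ∈ R x then (R x).equivFin ⟨y, h⟩ else 0

def freshCode (R : ℕ → Finset ℕ) (CE : Finset (Sym2 ℕ)) (W : ℕ → ℕ) (r : Fin k) : ℕ :=
  if IsFreshStep CE W r then nbrIndex R (W (r - 1)) (W r) else 0

def walkCode (t : Fin k → ℕ) (R : ℕ → Finset ℕ) (CE : Finset (Sym2 ℕ)) (W : ℕ → ℕ) :
    (Fin k → ℕ) × (Fin k → ℕ) :=
  (stepCode t CE W, freshCode R CE W)

lemma nbrIndex_lt_card {R : ℕ → Finset ℕ} {x y : ℕ} (hy : y ∈ R x) :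
    nbrIndex R x y < (R x).card := by
  simp [nbrIndex, hy]

lemma nbrIndex_injOn (R : ℕ → Finset ℕ) (x : ℕ) : Set.InjOn (nbrIndex R x) (R x) := by
  intro y hy z hz h
  simp only [nbrIndex, Finset.mem_coe.1 hy, Finset.mem_coe.1 hz, dif_pos] at h
  simpa using (R x).equivFin.injective (Fin.ext h)

variable {t : Fin k → ℕ} {CE : Finset (Sym2 ℕ)} {W : ℕ → ℕ}

lemma stepCode_le_or_ge (r : Fin k) : stepCode t CE W r ≤ r ∨ k ≤ stepCode t CE W r := by
  unfold stepCode
  split_ifs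
  · exact Or.inr (Nat.le_add_right _ _)
  · exact Or.inl (birth_le W r)

lemma cycEdge_stepCode (hCE : CE ⊆ (tupleEdges t).toFinset) {r : Fin k}
    (h : k ≤ stepCode t CE W r) : cycEdge t (stepCode t CE W r - k) = s(W (r - 1), W r) := by
  unfold stepCode at h ⊢
  split_ifs at h ⊢ with hmem
  · rw [Nat.add_sub_cancel_left]
    exact (edgeIndex_spec (hCE hmem)).2
  · exact absurd ((birth_le W r).trans_lt r.isLt) (not_lt.2 h)

lemma apply_stepCode {r : Fin k} (h : stepCode t CE W r < r) : W (stepCode t CE W r) = W r := by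
  unfold stepCode at h ⊢
  split_ifs at h ⊢
  · omega
  · exact apply_birth W r

lemma isFreshStep_iff_stepCode {r : Fin k} :
    IsFreshStep CE W r ↔ 1 ≤ (r : ℕ) ∧ stepCode t CE W r = r := by
  unfold IsFreshStep stepCode
  split_ifs with hmem
  · simp only [hmem, not_true_eq_false, false_and, and_false, false_iff]
    omega
  · simp [hmem]

lemma stepCode_lt (hCE : CE ⊆ (tupleEdges t).toFinset) (r : Fin k) :
    stepCode t CE W r < 2 * k := by
  unfold stepCode
  split_ifs with hmem
  · have := (edgeIndex_spec (hCE hmem)).1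
    omega
  · have := (birth_le W r).trans_lt r.isLt
    omega

lemma eq_of_walkCode_eq {R : ℕ → Finset ℕ} {CE' : Finset (Sym2 ℕ)} {W' : ℕ → ℕ}
    (hCE : CE ⊆ (tupleEdges t).toFinset) (hCE' : CE' ⊆ (tupleEdges t).toFinset)
    (hW : ∀ r, 1 ≤ r → r < k → W r ∈ R (W (r - 1)))
    (hW' : ∀ r, 1 ≤ r → r < k → W' r ∈ R (W' (r - 1)))
    (h0 : W 0 = W' 0) (hcode : walkCode t R CE W = walkCode t R CE' W') :
    ∀ r < k, W r = W' r := by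
  obtain ⟨hstep, hfresh⟩ := Prod.mk.inj hcode
  intro r
  induction r using Nat.strong_induction_on with
  | _ r ih =>
  intro hr
  rcases Nat.eq_zero_or_pos r with rfl | hr1
  · exact h0
  obtain ⟨i, rfl⟩ : ∃ i : Fin k, (i : ℕ) = r := ⟨⟨r, hr⟩, rfl⟩
  have hprev : W (i - 1) = W' (i - 1) := ih (i - 1) (by omega) (by omega)
  have hd : stepCode t CE W i = stepCode t CE' W' i := congrFun hstep i
  rcases stepCode_le_or_ge (t := t) (CE := CE) (W := W) i with hle | hge
  · rcases hle.lt_or_eq with hlt | heq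
    · rw [← apply_stepCode hlt, ← apply_stepCode (t := t) (CE := CE') (W := W') (hd ▸ hlt), ← hd]
      exact ih _ hlt (hlt.trans hr)
    · have hf : IsFreshStep CE W i := isFreshStep_iff_stepCode.2 ⟨hr1, heq⟩
      have hf' : IsFreshStep CE' W' i := isFreshStep_iff_stepCode.2 ⟨hr1, hd ▸ heq⟩
      have hidx := congrFun hfresh i
      simp only [freshCode, hf, hf', if_true, hprev] at hidx
      exact nbrIndex_injOn R _ (hprev ▸ hW i hr1 hr) (hW' i hr1 hr) hidx
  · have e := cycEdge_stepCode hCE hge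
    rw [hd, cycEdge_stepCode hCE' (hd ▸ hge), hprev] at e
    exact (Sym2.congr_right.1 e).symm

lemma walkCode_empty (t t' : Fin k → ℕ) (R : ℕ → Finset ℕ) (W : ℕ → ℕ) :
    walkCode t R ∅ W = walkCode t' R ∅ W := by
  unfold walkCode stepCode
  simp

def freshSlots (d : Fin k → ℕ) : Finset (Fin k) := univ.filter fun r => 1 ≤ (r : ℕ) ∧ d r = r

def walkCodes (k B M : ℕ) : Finset ((Fin k → ℕ) × (Fin k → ℕ)) :=
  ((Fintype.piFinset fun _ : Fin k => range (2 * k)).filter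
    fun d => (freshSlots d).card ≤ M).biUnion fun d =>
      (Fintype.piFinset fun r => if r ∈ freshSlots d then range B else {0}).image (Prod.mk d)

lemma card_walkCodes_le {B : ℕ} (hB : 1 ≤ B) (M : ℕ) :
    (walkCodes k B M).card ≤ (2 * k) ^ k * B ^ M := by
  refine Finset.card_biUnion_le.trans ?_
  calc _ ≤ ∑ _d ∈ Fintype.piFinset fun _ : Fin k => range (2 * k), B ^ M := by
        refine (Finset.sum_le_sum fun d hd => ?_).trans
          (Finset.sum_le_sum_of_subset (Finset.filter_subset _ _))
        refine Finset.card_image_le.trans ?_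
        have hcard : ∀ r, (if r ∈ freshSlots d then range B else {0}).card =
            if r ∈ freshSlots d then B else 1 := fun r => by split_ifs <;> simp
        rw [Fintype.card_piFinset, Finset.prod_congr rfl fun r _ => hcard r, Finset.prod_ite_mem,
          Finset.univ_inter, Finset.prod_const]
        exact Nat.pow_le_pow_right hB (Finset.mem_filter.1 hd).2
    _ = (2 * k) ^ k * B ^ M := by simp

lemma freshSlots_stepCode :
    freshSlots (stepCode t CE W) = univ.filter fun r : Fin k => IsFreshStep CE W r := by
  ext r
  simpa [freshSlots] using isFreshStep_iff_stepCode.symm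

lemma walkCode_mem_walkCodes {R : ℕ → Finset ℕ} {B M : ℕ} (hCE : CE ⊆ (tupleEdges t).toFinset)
    (hW : ∀ r, 1 ≤ r → r < k → W r ∈ R (W (r - 1)) ∧ (R (W (r - 1))).card ≤ B)
    (hM : freshCount k CE W ≤ M) :
    walkCode t R CE W ∈ walkCodes k B M := by
  refine Finset.mem_biUnion.2 ⟨stepCode t CE W, ?_, Finset.mem_image_of_mem _ ?_⟩
  · simp only [Finset.mem_filter, Fintype.mem_piFinset, Finset.mem_range, freshSlots_stepCode]
    exact ⟨stepCode_lt hCE, hM⟩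
  · rw [Fintype.mem_piFinset]
    intro r
    simp only [freshSlots_stepCode, Finset.mem_filter_univ, freshCode]
    split_ifs with hf
    · obtain ⟨hR, hcard⟩ := hW r hf.1 r.isLt
      exact Finset.mem_range.2 ((nbrIndex_lt_card hR).trans_le hcard)
    · exact Finset.mem_singleton_self 0

end WalkCode

section PairCode

variable {n bn k : ℕ}

lemma cycWalk_mem_Icc (hk : 0 < k) {t : Fin k → ℕ} (ht : t ∈ relTuples n bn k) (i : ℕ) :
    cycWalk t i ∈ Icc 1 n := by
  rw [← cycWalk_mod, cycWalk_val t ⟨i % k, Nat.mod_lt i hk⟩]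
  exact Fintype.mem_piFinset.1 (Finset.mem_filter.1 ht).1 _

lemma cycWalk_mem_relSet (hk : 0 < k) {t : Fin k → ℕ} (ht : t ∈ relTuples n bn k) {r : ℕ}
    (hr : 1 ≤ r) : cycWalk t r ∈ relSet n bn (cycWalk t (r - 1)) := by
  obtain ⟨i, rfl⟩ : ∃ i, r = i + 1 := ⟨r - 1, by omega⟩
  rw [Nat.add_sub_cancel]
  have hrel := (Finset.mem_filter.1 ht).2 ⟨i % k, Nat.mod_lt i hk⟩
  rw [apply_cyc t, ← cycWalk_val t ⟨i % k, _⟩, cycWalk_mod, cycWalk_add_mod] at hrel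
  exact Finset.mem_filter.2 ⟨cycWalk_mem_Icc hk ht _, hrel⟩

def commonSet (t t' : Fin k → ℕ) : Finset (Sym2 ℕ) :=
  (tupleEdges t).toFinset ∩ (tupleEdges t').toFinset

def anchor (t t' : Fin k → ℕ) : ℕ := sInf {j | j < k ∧ cycWalk t' j ∈ verts t}

def anchorIndex (t t' : Fin k → ℕ) : ℕ := sInf {i | i < k ∧ cycWalk t i = cycWalk t' (anchor t t')}

def rotWalk (t t' : Fin k → ℕ) (r : ℕ) : ℕ := cycWalk t' (anchor t t' + r)

lemma anchor_spec (hk : 0 < k) {t t' : Fin k → ℕ} (h : (commonSet t t').Nonempty) :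
    anchor t t' < k ∧ cycWalk t' (anchor t t') ∈ verts t := by
  obtain ⟨e, he⟩ := h
  obtain ⟨i, hi, rfl⟩ := mem_tupleEdges.1 (Finset.mem_inter.1 he).1
  obtain ⟨j, hj, hji⟩ := mem_tupleEdges.1 (Finset.mem_inter.1 he).2
  refine Nat.sInf_mem (s := {j | j < k ∧ cycWalk t' j ∈ verts t}) ⟨j, hj, ?_⟩
  have hmem : cycWalk t' j ∈ cycEdge t i := hji ▸ Sym2.mem_mk_left _ _
  rcases Sym2.mem_iff.1 hmem with h | h <;> rw [h, ← cycWalk_mod] <;>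
    exact Finset.mem_image.2 ⟨_, Finset.mem_univ _, (cycWalk_val t ⟨_, Nat.mod_lt _ hk⟩).symm⟩

lemma anchorIndex_spec (hk : 0 < k) {t t' : Fin k → ℕ} (h : (commonSet t t').Nonempty) :
    anchorIndex t t' < k ∧ cycWalk t (anchorIndex t t') = rotWalk t t' 0 := by
  obtain ⟨i, -, hi⟩ := Finset.mem_image.1 (anchor_spec hk h).2
  exact Nat.sInf_mem (s := {i | i < k ∧ cycWalk t i = cycWalk t' (anchor t t')})
    ⟨i, i.isLt, (cycWalk_val t i).trans hi⟩

lemma cycWalk_eq_rotWalk {t t' : Fin k → ℕ} (hj : anchor t t' < k) (i : ℕ) :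
    cycWalk t' i = rotWalk t t' ((i + k - anchor t t') % k) := by
  rw [rotWalk, ← cycWalk_mod, ← cycWalk_mod t' (_ + _), Nat.add_mod_mod,
    show anchor t t' + (i + k - anchor t t') = i + k by omega, Nat.add_mod_right]

lemma rotWalk_step_mem (hk : 0 < k) (t t' : Fin k → ℕ) {r : ℕ} (hr : 1 ≤ r) :
    s(rotWalk t t' (r - 1), rotWalk t t' r) ∈ (tupleEdges t').toFinset := by
  rw [rotWalk, rotWalk, show anchor t t' + r = anchor t t' + (r - 1) + 1 by omega]
  exact cycEdge_mem hk t' _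

lemma rotWalk_mem_relSet (hk : 0 < k) (t : Fin k → ℕ) {t' : Fin k → ℕ}
    (ht' : t' ∈ relTuples n bn k) {r : ℕ} (hr : 1 ≤ r) :
    rotWalk t t' r ∈ relSet n bn (rotWalk t t' (r - 1)) := by
  rw [rotWalk, rotWalk, show anchor t t' + (r - 1) = anchor t t' + r - 1 by omega]
  exact cycWalk_mem_relSet hk ht' (by omega)

def pairCode (n bn : ℕ) (p : (Fin k → ℕ) × (Fin k → ℕ)) :
    ℕ × ((Fin k → ℕ) × (Fin k → ℕ)) × ℕ × ℕ × ((Fin k → ℕ) × (Fin k → ℕ)) :=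
  (cycWalk p.1 0, walkCode p.1 (relSet n bn) ∅ (cycWalk p.1), anchor p.1 p.2,
    anchorIndex p.1 p.2, walkCode p.1 (relSet n bn) (commonSet p.1 p.2) (rotWalk p.1 p.2))

lemma pairCode_injOn (hk : 0 < k) :
    Set.InjOn (pairCode n bn) {p | p.1 ∈ relTuples n bn k ∧ p.2 ∈ relTuples n bn k ∧
      (commonSet p.1 p.2).Nonempty} := by
  rintro ⟨t, t'⟩ ⟨ht, ht', hne⟩ ⟨s, s'⟩ ⟨hs, hs', hne'⟩ h
  dsimp only at ht ht' hne hs hs' hne'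
  simp only [pairCode, Prod.mk.injEq] at h
  obtain ⟨h0, hcode, hanchor, hindex, hcode'⟩ := h
  have hwalk := eq_of_walkCode_eq (Finset.empty_subset _) (Finset.empty_subset _)
    (fun r hr _ => cycWalk_mem_relSet hk ht hr) (fun r hr _ => cycWalk_mem_relSet hk hs hr) h0
    (hcode.trans (walkCode_empty s t _ _))
  obtain rfl : t = s := funext fun i => by
    rw [← cycWalk_val t, ← cycWalk_val s]
    exact hwalk i i.isLt
  have hstart : rotWalk t t' 0 = rotWalk t s' 0 := by
    rw [← (anchorIndex_spec hk hne).2, ← (anchorIndex_spec hk hne').2, hindex]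
  have hrot := eq_of_walkCode_eq Finset.inter_subset_left Finset.inter_subset_left
    (fun r hr _ => rotWalk_mem_relSet hk t ht' hr) (fun r hr _ => rotWalk_mem_relSet hk t hs' hr)
    hstart hcode'
  refine Prod.ext rfl (funext fun i => ?_)
  dsimp only
  rw [← cycWalk_val t', ← cycWalk_val s', cycWalk_eq_rotWalk (anchor_spec hk hne).1,
    cycWalk_eq_rotWalk (anchor_spec hk hne').1, ← hanchor]
  exact hrot _ (Nat.mod_lt _ hk)

def pairCodes (n k B M₁ M₂ : ℕ) :
    Finset (ℕ × ((Fin k → ℕ) × (Fin k → ℕ)) × ℕ × ℕ × ((Fin k → ℕ) × (Fin k → ℕ))) :=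
  Icc 1 n ×ˢ walkCodes k B M₁ ×ˢ range k ×ˢ range k ×ˢ walkCodes k B M₂

lemma card_pairCodes_le {B : ℕ} (hB : 1 ≤ B) (M₁ M₂ : ℕ) :
    (pairCodes n k B M₁ M₂).card ≤ k ^ 2 * (2 * k) ^ (2 * k) * n * B ^ (M₁ + M₂) := by
  simp only [pairCodes, Finset.card_product, Nat.card_Icc, Finset.card_range, Nat.add_sub_cancel]
  calc _ ≤ n * ((2 * k) ^ k * B ^ M₁ * (k * (k * ((2 * k) ^ k * B ^ M₂)))) := by
        gcongr <;> exact card_walkCodes_le hB _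
    _ = k ^ 2 * (2 * k) ^ (2 * k) * n * B ^ (M₁ + M₂) := by ring

end PairCode

section Count

variable {n bn k : ℕ} {u u' : Fin k → ℕ}

lemma card_le_of_freshCount_le (hn : 0 < n) (hk : 0 < k) (hb : IsBandwidth n bn)
    {S : Finset ((Fin k → ℕ) × (Fin k → ℕ))} {M₁ M₂ : ℕ}
    (hS : ∀ p ∈ S, p.1 ∈ relTuples n bn k ∧ p.2 ∈ relTuples n bn k ∧
      (commonSet p.1 p.2).Nonempty ∧ freshCount k ∅ (cycWalk p.1) ≤ M₁ ∧
      freshCount k (commonSet p.1 p.2) (rotWalk p.1 p.2) ≤ M₂) :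
    S.card ≤ k ^ 2 * (2 * k) ^ (2 * k) * n * bn ^ (M₁ + M₂) := by
  refine (Finset.card_le_card_of_injOn (pairCode n bn) (fun p hp => ?_)
    ((pairCode_injOn hk).mono fun p hp => ?_)).trans (card_pairCodes_le (hb.one_le hn) M₁ M₂)
  · obtain ⟨ht, ht', hne, hM₁, hM₂⟩ := hS p hp
    have hcard : ∀ {t : Fin k → ℕ}, t ∈ relTuples n bn k → ∀ i,
        (relSet n bn (cycWalk t i)).card ≤ bn :=
      fun ht i => card_relSet_le hb (cycWalk_mem_Icc hk ht i)
    simp only [pairCodes, pairCode, Finset.coe_product, Set.mem_prod, Finset.mem_coe,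
      Finset.mem_range]
    exact ⟨cycWalk_mem_Icc hk ht 0,
      walkCode_mem_walkCodes (Finset.empty_subset _)
        (fun r hr _ => ⟨cycWalk_mem_relSet hk ht hr, hcard ht _⟩) hM₁,
      (anchor_spec hk hne).1, (anchorIndex_spec hk hne).1,
      walkCode_mem_walkCodes Finset.inter_subset_left
        (fun r hr _ => ⟨rotWalk_mem_relSet hk _ ht' hr, hcard ht' _⟩) hM₂⟩
  · obtain ⟨ht, ht', hne, -⟩ := hS p hp
    exact ⟨ht, ht', hne⟩

lemma mem_Tcommon {p : (Fin k → ℕ) × (Fin k → ℕ)} :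
    p ∈ Tcommon n bn k u u' ↔ p.1 ∈ relTuples n bn k ∧ p.2 ∈ relTuples n bn k ∧
      sameProfile p.1 u ∧ sameProfile p.2 u' ∧ (commonSet p.1 p.2).Nonempty := by
  simp [Tcommon, commonSet, and_assoc]

lemma card_commonSet_le {p : (Fin k → ℕ) × (Fin k → ℕ)} (hp : p ∈ Tcommon n bn k u u') :
    (commonSet p.1 p.2).card ≤ (tupleEdges u).toFinset.card ∧
      (commonSet p.1 p.2).card ≤ (tupleEdges u').toFinset.card := by
  obtain ⟨-, -, h, h', -⟩ := mem_Tcommon.1 hp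
  rw [← h.card_edges_eq, ← h'.card_edges_eq]
  exact ⟨Finset.card_le_card Finset.inter_subset_left,
    Finset.card_le_card Finset.inter_subset_right⟩

lemma swap_mem_Tcommon {p : (Fin k → ℕ) × (Fin k → ℕ)} (hp : p ∈ Tcommon n bn k u u') :
    p.swap ∈ Tcommon n bn k u' u := by
  obtain ⟨ht, ht', h, h', hne⟩ := mem_Tcommon.1 hp
  exact mem_Tcommon.2 ⟨ht', ht, h', h, by rwa [commonSet, Finset.inter_comm]⟩

lemma card_le_of_subset_Tcommon (hn : 0 < n) (hk : 0 < k) (hb : IsBandwidth n bn)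
    {S : Finset ((Fin k → ℕ) × (Fin k → ℕ))} (hS : S ⊆ Tcommon n bn k u u') {M c : ℕ}
    (hM : ∀ p ∈ S, freshCount k ∅ (cycWalk p.1) ≤ M)
    (hc : ∀ p ∈ S, c ≤ (commonSet p.1 p.2).card) :
    S.card ≤ k ^ 2 * (2 * k) ^ (2 * k) * n * bn ^ (M + ((tupleEdges u').toFinset.card - c)) := by
  refine card_le_of_freshCount_le hn hk hb fun p hp => ?_
  obtain ⟨ht, ht', -, h', hne⟩ := mem_Tcommon.1 (hS hp)
  have := freshCount_add_card_le (k := k) (CE := commonSet p.1 p.2)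
    (fun r hr _ => rotWalk_step_mem hk p.1 p.2 hr) Finset.inter_subset_right
  rw [h'.card_edges_eq] at this
  exact ⟨ht, ht', hne, hM p hp, by have := hc p hp; omega⟩

lemma card_Tcommon_le_of_hasOnlyEvenEdges (hn : 0 < n) (hk : 0 < k) (hb : IsBandwidth n bn)
    (hu : hasOnlyEvenEdges u) (hu' : hasOnlyEvenEdges u') :
    (Tcommon n bn k u u').card ≤ k ^ 2 * (2 * k) ^ (2 * k) * n * bn ^ (k - 1) := by
  refine (card_le_of_subset_Tcommon hn hk hb subset_rfl (M := (tupleEdges u).toFinset.card)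
    (c := 1) (fun p hp => ?_) fun p hp => Finset.card_pos.2 (mem_Tcommon.1 hp).2.2.2.2).trans
    (Nat.mul_le_mul_left _ (Nat.pow_le_pow_right (hb.one_le hn) ?_))
  · exact (mem_Tcommon.1 hp).2.2.1.card_edges_eq ▸ freshCount_le_card_edges hk p.1
  · have := two_mul_card_edges_le hu
    have := two_mul_card_edges_le hu'
    have := card_edges_pos hk u'
    omega

lemma card_le_of_subset_Tcommon_of_hasOddEdge_left (hn : 0 < n) (hk : 0 < k)
    (hb : IsBandwidth n bn) (hodd : hasOddEdge u) {S : Finset ((Fin k → ℕ) × (Fin k → ℕ))}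
    (hS : S ⊆ Tcommon n bn k u u') {c : ℕ} (hc : ∀ p ∈ S, c ≤ (commonSet p.1 p.2).card) :
    S.card ≤ k ^ 2 * (2 * k) ^ (2 * k) * n *
      bn ^ ((tupleEdges u).toFinset.card - 1 + ((tupleEdges u').toFinset.card - c)) := by
  refine card_le_of_subset_Tcommon hn hk hb hS (fun p hp => ?_) hc
  obtain ⟨-, -, h, -⟩ := mem_Tcommon.1 (hS hp)
  have := freshCount_lt_card_edges hk (h.hasOddEdge hodd)
  rw [h.card_edges_eq] at this
  omega

lemma card_le_of_subset_Tcommon_of_hasOddEdge (hn : 0 < n) (hk : 0 < k) (hb : IsBandwidth n bn)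
    (hodd : hasOddEdge u ∨ hasOddEdge u') {S : Finset ((Fin k → ℕ) × (Fin k → ℕ))}
    (hS : S ⊆ Tcommon n bn k u u') {c : ℕ} (hc : ∀ p ∈ S, c ≤ (commonSet p.1 p.2).card) :
    S.card ≤ k ^ 2 * (2 * k) ^ (2 * k) * n *
      bn ^ ((tupleEdges u).toFinset.card + (tupleEdges u').toFinset.card - c - 1) := by
  rcases S.eq_empty_or_nonempty with rfl | ⟨q, hq⟩
  · simp
  have hcu := (hc q hq).trans (card_commonSet_le (hS hq)).1
  have hcu' := (hc q hq).trans (card_commonSet_le (hS hq)).2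
  have hpos := card_edges_pos hk u
  have hpos' := card_edges_pos hk u'
  rcases hodd with hodd | hodd
  · exact (card_le_of_subset_Tcommon_of_hasOddEdge_left hn hk hb hodd hS hc).trans_eq
      (by congr 2; omega)
  · rw [← Finset.card_map (Equiv.prodComm _ _).toEmbedding]
    refine (card_le_of_subset_Tcommon_of_hasOddEdge_left hn hk hb hodd (u' := u) (c := c) ?_
      ?_).trans_eq (by congr 2; omega)
    · intro p hp
      obtain ⟨q, hq, rfl⟩ := Finset.mem_map.1 hp
      exact swap_mem_Tcommon (hS hq)
    · intro p hp
      obtain ⟨q, hq, rfl⟩ := Finset.mem_map.1 hp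
      simpa [commonSet, Finset.inter_comm] using hc q hq

end Count

lemma natCast_card_le_zpow {α : Type*} {S : Finset α} {k n b : ℕ} {z : ℤ}
    (h : S.Nonempty → ∃ m : ℕ, (m : ℤ) = z ∧ S.card ≤ k ^ 2 * (2 * k) ^ (2 * k) * n * b ^ m) :
    (S.card : ℝ) ≤ (k : ℝ) ^ 2 * (2 * (k : ℝ)) ^ (2 * k) * (n : ℝ) * (b : ℝ) ^ z := by
  rcases S.eq_empty_or_nonempty with rfl | hS
  · simp only [Finset.card_empty, Nat.cast_zero]
    positivity
  obtain ⟨m, rfl, hm⟩ := h hS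
  rw [zpow_natCast]
  exact_mod_cast hm

theorem stmt17_general (b : ℕ → ℕ) (hband : ∀ m, 1 ≤ m → IsBandwidth m (b m))
    (n k : ℕ) (hk : 0 < k) (hn : 0 < n) (u u' : Fin k → ℕ) :
    (hasOnlyEvenEdges u → hasOnlyEvenEdges u' →
      ((Tcommon n (b n) k u u').card : ℝ) ≤
        (k : ℝ) ^ 2 * (2 * (k : ℝ)) ^ (2 * k) * (n : ℝ) * (b n : ℝ) ^ ((k : ℤ) - 1)) ∧
    ((hasOddEdge u ∨ hasOddEdge u') →
      ((Tcommon n (b n) k u u').card : ℝ) ≤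
        (k : ℝ) ^ 2 * (2 * (k : ℝ)) ^ (2 * k) * (n : ℝ) *
          (b n : ℝ) ^ ((↑(∑ l ∈ Finset.Icc 1 k, kappa u l) : ℤ) +
            (↑(∑ l ∈ Finset.Icc 1 k, kappa u' l) : ℤ) - 2)) ∧
    ((hasOddEdge u ∨ hasOddEdge u') → ∀ l ∈ Finset.Icc 1 k,
      ((TcommonL n (b n) k u u' l).card : ℝ) ≤
        (k : ℝ) ^ 2 * (2 * (k : ℝ)) ^ (2 * k) * (n : ℝ) *
          (b n : ℝ) ^ ((↑(∑ l' ∈ Finset.Icc 1 k, kappa u l') : ℤ) +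
            (↑(∑ l' ∈ Finset.Icc 1 k, kappa u' l') : ℤ) - (l : ℤ) - 1)) := by
  have hb := hband n hn
  have hpos := card_edges_pos hk u
  have hpos' := card_edges_pos hk u'
  simp only [sum_kappa]
  refine ⟨fun hu hu' => ?_, fun hodd => ?_, fun hodd l _ => ?_⟩
  · exact natCast_card_le_zpow fun _ =>
      ⟨k - 1, by omega, card_Tcommon_le_of_hasOnlyEvenEdges hn hk hb hu hu'⟩
  · exact natCast_card_le_zpow fun _ => ⟨_, by omega,
      card_le_of_subset_Tcommon_of_hasOddEdge hn hk hb hodd subset_rfl (c := 1)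
        fun p hp => Finset.card_pos.2 (mem_Tcommon.1 hp).2.2.2.2⟩
  · refine natCast_card_le_zpow fun ⟨p, hp⟩ => ⟨_, ?_,
      card_le_of_subset_Tcommon_of_hasOddEdge hn hk hb hodd (Finset.filter_subset _ _) (c := l)
        fun q hq => (Finset.mem_filter.1 hq).2.ge⟩
    have hl : (commonSet p.1 p.2).card = l := (Finset.mem_filter.1 hp).2
    have := (card_commonSet_le (Finset.mem_filter.1 hp).1).1
    omega

/-- Bounds on the number of pairs of tuples with prescribed profiles
sharing at least one (resp. exactly `l`) common edges. -/
theorem stmt17 (b : ℕ → ℕ) (hband : ∀ m, 1 ≤ m → IsBandwidth m (b m))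
    (n k : ℕ) (hk : 0 < k) (hn : 0 < n) (u u' : Fin k → ℕ)
    (hu : u ∈ relTuples n (b n) k) (hu' : u' ∈ relTuples n (b n) k) :
    (hasOnlyEvenEdges u → hasOnlyEvenEdges u' →
      ((Tcommon n (b n) k u u').card : ℝ) ≤
        (k : ℝ) ^ 2 * (2 * (k : ℝ)) ^ (2 * k) * (n : ℝ) * (b n : ℝ) ^ ((k : ℤ) - 1)) ∧
    ((hasOddEdge u ∨ hasOddEdge u') →
      ((Tcommon n (b n) k u u').card : ℝ) ≤
        (k : ℝ) ^ 2 * (2 * (k : ℝ)) ^ (2 * k) * (n : ℝ) *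
          (b n : ℝ) ^ ((↑(∑ l ∈ Finset.Icc 1 k, kappa u l) : ℤ) +
            (↑(∑ l ∈ Finset.Icc 1 k, kappa u' l) : ℤ) - 2)) ∧
    ((hasOddEdge u ∨ hasOddEdge u') → ∀ l ∈ Finset.Icc 1 k,
      ((TcommonL n (b n) k u u' l).card : ℝ) ≤
        (k : ℝ) ^ 2 * (2 * (k : ℝ)) ^ (2 * k) * (n : ℝ) *
          (b n : ℝ) ^ ((↑(∑ l' ∈ Finset.Icc 1 k, kappa u l') : ℤ) +
            (↑(∑ l' ∈ Finset.Icc 1 k, kappa u' l') : ℤ) - (l : ℤ) - 1)) :=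
  stmt17_general b hband n k hk hn u u'

end RMT
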